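/- Let α, β be real numbers with α ≥ β ≥ -1/2, and for each natural number ℓ define N_ℓ = (2ℓ + α + β + 1) Γ(β+1) Γ(ℓ+α+β+1) Γ(ℓ+α+1) / (Γ(α+1) Γ(α+β+2) Γ(ℓ+1) Γ(ℓ+β+1)) and λ_ℓ = -ℓ(ℓ+α+β+1). Then for a real number p ≥ 0, the double series ∑_{ℓ=0}^∞ ∑_{ℓ'=0}^∞ N_ℓ N_{ℓ'} / ((1 + ℓ(ℓ+α+β+1))^p (1 + ℓ'(ℓ'+α+β+1))^p) converges if and only if p > α + 1. Equivalently, with d = 2α + 2, the tensorial Sobolev space ℍ_p(𝕄^d × 𝕄^d) is a reproducing kernel Hilbert space if and only if p > d/2, if and only if ℋ_p(𝕄^d) is a reproducing kernel Hilbert space. -/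
import Mathlib

open Real

-- Wendel upper bound
lemma wendel_upper {x s : ℝ} (hx : 0 < x) (hs0 : 0 ≤ s) (hs1 : s ≤ 1) :
    Real.Gamma (x + s) ≤ x ^ s * Real.Gamma x := by
  have hconv := Real.convexOn_log_Gamma
  have h1 : (x : ℝ) ∈ Set.Ioi (0:ℝ) := hx
  have h2 : (x + 1 : ℝ) ∈ Set.Ioi (0:ℝ) := by simp; linarith
  have key := hconv.2 h1 h2 (by linarith : (0:ℝ) ≤ 1 - s) hs0 (by ring)
  have hxs : (1 - s) • x + s • (x + 1) = x + s := by simp [smul_eq_mul]; ring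
  rw [hxs] at key
  simp only [Function.comp] at key
  have hGx : 0 < Real.Gamma x := Real.Gamma_pos_of_pos hx
  have hGx1 : 0 < Real.Gamma (x + 1) := Real.Gamma_pos_of_pos (by linarith)
  have hGxs : 0 < Real.Gamma (x + s) := Real.Gamma_pos_of_pos (by linarith)
  simp only [smul_eq_mul] at key
  have := Real.exp_le_exp.2 key
  rw [Real.exp_log hGxs, Real.exp_add, ← Real.log_rpow hGx, ← Real.log_rpow hGx1,
    Real.exp_log (Real.rpow_pos_of_pos hGx _), Real.exp_log (Real.rpow_pos_of_pos hGx1 _)] at this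
  calc Real.Gamma (x + s) ≤ Real.Gamma x ^ (1 - s) * Real.Gamma (x + 1) ^ s := this
    _ = x ^ s * Real.Gamma x := by
        rw [Real.Gamma_add_one (ne_of_gt hx), Real.mul_rpow hx.le hGx.le,
          Real.rpow_sub hGx, Real.rpow_one]
        field_simp
-- Wendel lower bound for x ≥ 1
lemma wendel_lower {x s : ℝ} (hx : 1 ≤ x) (hs0 : 0 ≤ s) (hs1 : s ≤ 1) :
    (1/2) * (x ^ s * Real.Gamma x) ≤ Real.Gamma (x + s) := by
  have hx0 : (0:ℝ) < x := by linarith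
  have hxs0 : (0:ℝ) < x + s := by linarith
  have h := wendel_upper (x := x + s) (s := 1 - s) hxs0 (by linarith) (by linarith)
  have he : x + s + (1 - s) = x + 1 := by ring
  rw [he, Real.Gamma_add_one (ne_of_gt hx0)] at h
  -- h : x * Gamma x ≤ (x+s)^(1-s) * Gamma (x+s)
  have hGxs : 0 < Real.Gamma (x + s) := Real.Gamma_pos_of_pos hxs0
  have hpow : (x + s) ^ (1 - s) ≤ 2 * x ^ (1 - s) := by
    calc (x + s) ^ (1 - s) ≤ (2 * x) ^ (1 - s) := by
          apply Real.rpow_le_rpow (by linarith) (by linarith) (by linarith)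
      _ = 2 ^ (1-s) * x ^ (1 - s) := Real.mul_rpow (by norm_num) hx0.le
      _ ≤ 2 * x ^ (1 - s) := by
          gcongr
          calc (2:ℝ) ^ (1 - s) ≤ 2 ^ (1:ℝ) := by
                apply Real.rpow_le_rpow_of_exponent_le (by norm_num) (by linarith)
            _ = 2 := by norm_num
  have h2 : x * Real.Gamma x ≤ 2 * x ^ (1 - s) * Real.Gamma (x + s) := by
    calc x * Real.Gamma x ≤ (x+s)^(1-s) * Real.Gamma (x+s) := h
      _ ≤ 2 * x ^ (1 - s) * Real.Gamma (x + s) := by gcongr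
  have hxpow : x ^ (1 - s) * x ^ s = x := by
    rw [← Real.rpow_add hx0]; simp
  have hxspos : 0 < x ^ s := Real.rpow_pos_of_pos hx0 _
  have hx1s : 0 < x ^ (1-s) := Real.rpow_pos_of_pos hx0 _
  nlinarith [Real.Gamma_pos_of_pos hx0]
lemma gamma_shift_nat (n : ℕ) {s : ℝ} (hs0 : 0 ≤ s) (hs1 : s ≤ 1) :
    ∃ C : ℝ, 0 < C ∧ ∀ x : ℝ, 1 ≤ x →
      (1/2) * (x ^ ((n : ℝ) + s) * Real.Gamma x) ≤ Real.Gamma (x + ((n : ℝ) + s)) ∧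
      Real.Gamma (x + ((n : ℝ) + s)) ≤ C * (x ^ ((n : ℝ) + s) * Real.Gamma x) := by
  induction n with
  | zero =>
    refine ⟨1, one_pos, fun x hx => ?_⟩
    have hx0 : (0:ℝ) < x := by linarith
    simp only [Nat.cast_zero, zero_add, one_mul]
    exact ⟨wendel_lower hx hs0 hs1, wendel_upper hx0 hs0 hs1⟩
  | succ n ih =>
    obtain ⟨C, hC, hCb⟩ := ih
    refine ⟨(n + 2) * C, by positivity, fun x hx => ?_⟩
    have hx0 : (0:ℝ) < x := by linarith
    obtain ⟨hlo, hhi⟩ := hCb x hx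
    have hGe : Real.Gamma (x + ((n + 1 : ℕ) + s)) = (x + (n + s)) * Real.Gamma (x + ((n:ℝ) + s)) := by
      rw [show x + (((n:ℕ) + 1 : ℕ) + s) = (x + ((n:ℝ) + s)) + 1 by push_cast; ring]
      rw [Real.Gamma_add_one (by positivity)]
    have hpowe : x ^ (((n + 1 : ℕ) : ℝ) + s) = x ^ ((n:ℝ) + s) * x := by
      rw [show ((n+1:ℕ):ℝ) + s = ((n:ℝ) + s) + 1 by push_cast; ring,
        Real.rpow_add hx0, Real.rpow_one]
    have hfac_lo : x ≤ x + ((n:ℝ) + s) := by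
      have := Nat.cast_nonneg (α := ℝ) n; linarith
    have hfac_hi : x + ((n:ℝ) + s) ≤ (n + 2) * x := by nlinarith [Nat.cast_nonneg (α := ℝ) n]
    have hG0 : 0 < Real.Gamma (x + ((n:ℝ) + s)) := Real.Gamma_pos_of_pos (by positivity)
    have hxp : 0 < x ^ ((n:ℝ) + s) := Real.rpow_pos_of_pos hx0 _
    have hGx : 0 < Real.Gamma x := Real.Gamma_pos_of_pos hx0
    constructor
    · rw [hGe, hpowe]
      nlinarith
    · rw [hGe, hpowe]
      nlinarith
lemma gamma_ratio_bound {a : ℝ} (ha : -1/2 ≤ a) :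
    ∃ c C : ℝ, 0 < c ∧ 0 < C ∧ ∀ x : ℝ, 2 ≤ x →
      c * (x ^ a * Real.Gamma x) ≤ Real.Gamma (x + a) ∧
      Real.Gamma (x + a) ≤ C * (x ^ a * Real.Gamma x) := by
  rcases le_or_gt 0 a with ha0 | ha0
  · -- a ≥ 0 : use floor decomposition
    set n := ⌊a⌋₊ with hn
    set s := a - n with hs
    have hs0 : 0 ≤ s := by
      have := Nat.floor_le ha0
      simp only [hs]; linarith
    have hs1 : s ≤ 1 := by
      have := (Nat.lt_floor_add_one a).le
      simp only [hs]; linarith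
    obtain ⟨C, hC, hb⟩ := gamma_shift_nat n hs0 hs1
    have hae : (n : ℝ) + s = a := by simp [hs]
    refine ⟨1/2, C, by norm_num, hC, fun x hx => ?_⟩
    have := hb x (by linarith)
    rw [hae] at this
    exact this
  · -- -1/2 ≤ a < 0
    refine ⟨1, 4, one_pos, by norm_num, fun x hx => ?_⟩
    set y := x + a with hy
    set t := -a with ht
    have hy1 : 1 ≤ y := by simp only [hy]; linarith
    have hy0 : 0 < y := by linarith
    have ht0 : 0 ≤ t := by simp only [ht]; linarith
    have ht1 : t ≤ 1 := by simp only [ht]; linarith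
    have hyt : y + t = x := by simp [hy, ht]
    have hup := wendel_upper hy0 ht0 ht1
    have hlo := wendel_lower hy1 ht0 ht1
    rw [hyt] at hup hlo
    -- hup : Γ x ≤ y^t Γ y ; hlo : (1/2) y^t Γ y ≤ Γ x
    have hyt_pos : 0 < y ^ t := Real.rpow_pos_of_pos hy0 _
    have hGy : 0 < Real.Gamma y := Real.Gamma_pos_of_pos hy0
    have hGx : 0 < Real.Gamma x := Real.Gamma_pos_of_pos (by linarith)
    have hx0 : (0:ℝ) < x := by linarith
    have hya : y ^ a = (y ^ t)⁻¹ := by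
      rw [ht, Real.rpow_neg hy0.le, inv_inv]
    -- bounds relating y^a and x^a
    have hxa_pos : 0 < x ^ a := Real.rpow_pos_of_pos hx0 _
    have hya_pos : 0 < y ^ a := Real.rpow_pos_of_pos hy0 _
    have h1 : x ^ a ≤ y ^ a :=
      Real.rpow_le_rpow_of_nonpos hy0 (by simp only [hy]; linarith) ha0.le
    have h2 : y ^ a ≤ 2 * x ^ a := by
      have hxy : x / 2 ≤ y := by simp only [hy]; linarith
      have := Real.rpow_le_rpow_of_nonpos (by linarith : (0:ℝ) < x/2) hxy ha0.le
      calc y ^ a ≤ (x/2) ^ a := this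
        _ = x ^ a * ((2:ℝ) ^ a)⁻¹ := by
            rw [div_eq_mul_inv, Real.mul_rpow hx0.le (by norm_num),
              Real.inv_rpow (by norm_num)]
        _ ≤ 2 * x ^ a := by
            rw [← Real.rpow_neg (by norm_num)]
            have : (2:ℝ) ^ (-a) ≤ 2 ^ (1:ℝ) :=
              Real.rpow_le_rpow_of_exponent_le (by norm_num) (by linarith)
            rw [Real.rpow_one] at this
            nlinarith
    constructor
    · -- lower:  1 * (x^a Γ x) ≤ Γ y
      -- Γ x ≤ y^t Γ y  ⇒  Γ y ≥ Γ x / y^t = Γ x * y^a ≥ Γ x * x^a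
      have : Real.Gamma x * y ^ a ≤ Real.Gamma y := by
        rw [hya, ← div_eq_mul_inv, div_le_iff₀ hyt_pos]
        linarith [hup]
      nlinarith
    · -- upper: Γ y ≤ 2 Γ x y^a ≤ 4 x^a Γ x
      have : Real.Gamma y ≤ 2 * Real.Gamma x * y ^ a := by
        rw [hya, ← div_eq_mul_inv, le_div_iff₀ hyt_pos]
        nlinarith
      nlinarith
-- comparison of rpow at comparable bases
lemma rpow_base_comparable {a K : ℝ} (hK : 1 ≤ K) :
    ∃ c C : ℝ, 0 < c ∧ 0 < C ∧ ∀ x y : ℝ, 0 < x → x ≤ y → y ≤ K * x →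
      c * x ^ a ≤ y ^ a ∧ y ^ a ≤ C * x ^ a := by
  have hK0 : (0:ℝ) < K := by linarith
  have hKa : 0 < K ^ a := Real.rpow_pos_of_pos hK0 _
  refine ⟨min 1 (K ^ a), max 1 (K ^ a), lt_min one_pos hKa, lt_of_lt_of_le one_pos (le_max_left _ _),
    fun x y hx hxy hyK => ?_⟩
  have hy : 0 < y := lt_of_lt_of_le hx hxy
  have hxa : 0 < x ^ a := Real.rpow_pos_of_pos hx _
  have hKxa : (K * x) ^ a = K ^ a * x ^ a := Real.mul_rpow hK0.le hx.le
  rcases le_or_gt 0 a with ha | ha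
  · have h1 : x ^ a ≤ y ^ a := Real.rpow_le_rpow hx.le hxy ha
    have h2 : y ^ a ≤ (K * x) ^ a := Real.rpow_le_rpow hy.le hyK ha
    rw [hKxa] at h2
    constructor
    · calc min 1 (K ^ a) * x ^ a ≤ 1 * x ^ a := by
            apply mul_le_mul_of_nonneg_right (min_le_left _ _) hxa.le
        _ = x ^ a := one_mul _
        _ ≤ y ^ a := h1
    · calc y ^ a ≤ K ^ a * x ^ a := h2
        _ ≤ max 1 (K ^ a) * x ^ a :=
            mul_le_mul_of_nonneg_right (le_max_right _ _) hxa.le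
  · have h1 : y ^ a ≤ x ^ a := Real.rpow_le_rpow_of_nonpos hx hxy ha.le
    have h2 : (K * x) ^ a ≤ y ^ a := Real.rpow_le_rpow_of_nonpos hy hyK ha.le
    rw [hKxa] at h2
    constructor
    · calc min 1 (K ^ a) * x ^ a ≤ K ^ a * x ^ a :=
            mul_le_mul_of_nonneg_right (min_le_right _ _) hxa.le
        _ ≤ y ^ a := h2
    · calc y ^ a ≤ x ^ a := h1
        _ = 1 * x ^ a := (one_mul _).symm
        _ ≤ max 1 (K ^ a) * x ^ a :=
            mul_le_mul_of_nonneg_right (le_max_left _ _) hxa.le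
set_option maxHeartbeats 1000000 in
lemma N_two_sided (α β : ℝ) (hβ : -1/2 ≤ β) (hαβ : β ≤ α) :
    ∃ c C : ℝ, 0 < c ∧ 0 < C ∧ ∀ ℓ : ℕ, 2 ≤ ℓ →
      c * (ℓ:ℝ) ^ (2*α+1) ≤
        (2 * ℓ + α + β + 1) * Real.Gamma (β + 1) * Real.Gamma (ℓ + α + β + 1) *
          Real.Gamma (ℓ + α + 1) /
        (Real.Gamma (α + 1) * Real.Gamma (α + β + 2) * Real.Gamma (ℓ + 1) *
          Real.Gamma (ℓ + β + 1)) ∧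
      (2 * ℓ + α + β + 1) * Real.Gamma (β + 1) * Real.Gamma (ℓ + α + β + 1) *
          Real.Gamma (ℓ + α + 1) /
        (Real.Gamma (α + 1) * Real.Gamma (α + β + 2) * Real.Gamma (ℓ + 1) *
          Real.Gamma (ℓ + β + 1)) ≤ C * (ℓ:ℝ) ^ (2*α+1) := by
  have hα : -1/2 ≤ α := le_trans hβ hαβ
  obtain ⟨c₁, C₁, hc₁, hC₁, hg⟩ := gamma_ratio_bound hα
  obtain ⟨c₂, C₂, hc₂, hC₂, hr⟩ := rpow_base_comparable (a := α) (K := β + 2) (by linarith)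
  have hGβ : 0 < Real.Gamma (β + 1) := Real.Gamma_pos_of_pos (by linarith)
  have hGα : 0 < Real.Gamma (α + 1) := Real.Gamma_pos_of_pos (by linarith)
  have hGαβ : 0 < Real.Gamma (α + β + 2) := Real.Gamma_pos_of_pos (by linarith)
  set K₀ : ℝ := Real.Gamma (β + 1) / (Real.Gamma (α + 1) * Real.Gamma (α + β + 2)) with hK₀
  have hK₀pos : 0 < K₀ := by positivity
  refine ⟨2 * K₀ * (c₁ * c₂) ^ 2, (2 + (α + β + 1)) * K₀ * (C₁ * C₂) ^ 2,
    by positivity, mul_pos (mul_pos (by linarith) hK₀pos) (by positivity), fun ℓ hℓ => ?_⟩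
  have hL : (2:ℝ) ≤ (ℓ:ℝ) := by exact_mod_cast hℓ
  set L : ℝ := (ℓ : ℝ) with hLdef
  have hL0 : (0:ℝ) < L := by linarith
  set x₁ : ℝ := L + β + 1 with hx₁
  set x₂ : ℝ := L + 1 with hx₂
  have hx₁2 : 2 ≤ x₁ := by simp only [hx₁]; linarith
  have hx₂2 : 2 ≤ x₂ := by simp only [hx₂]; linarith
  have hΓx₁ : 0 < Real.Gamma x₁ := Real.Gamma_pos_of_pos (by linarith)
  have hΓx₂ : 0 < Real.Gamma x₂ := Real.Gamma_pos_of_pos (by linarith)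
  obtain ⟨hg₁lo, hg₁hi⟩ := hg x₁ hx₁2
  obtain ⟨hg₂lo, hg₂hi⟩ := hg x₂ hx₂2
  obtain ⟨hr₁lo, hr₁hi⟩ := hr L x₁ hL0 (by simp only [hx₁]; linarith)
    (by simp only [hx₁]; nlinarith)
  obtain ⟨hr₂lo, hr₂hi⟩ := hr L x₂ hL0 (by simp only [hx₂]; linarith)
    (by simp only [hx₂]; nlinarith)
  -- rewrite the Gamma arguments
  have e₁ : L + α + β + 1 = x₁ + α := by simp only [hx₁]; ring
  have e₂ : L + α + 1 = x₂ + α := by simp only [hx₂]; ring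
  have e₃ : L + 1 = x₂ := rfl
  have e₄ : L + β + 1 = x₁ := rfl
  have hxa₁ : 0 < x₁ ^ α := Real.rpow_pos_of_pos (by linarith) _
  have hxa₂ : 0 < x₂ ^ α := Real.rpow_pos_of_pos (by linarith) _
  have hLa : 0 < L ^ α := Real.rpow_pos_of_pos hL0 _
  -- ratio bounds
  set r₁ : ℝ := Real.Gamma (x₁ + α) / Real.Gamma x₁ with hr₁def
  set r₂ : ℝ := Real.Gamma (x₂ + α) / Real.Gamma x₂ with hr₂def
  have hr₁b : c₁ * c₂ * L ^ α ≤ r₁ ∧ r₁ ≤ C₁ * C₂ * L ^ α := by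
    constructor
    · rw [hr₁def, le_div_iff₀ hΓx₁]
      calc c₁ * c₂ * L ^ α * Real.Gamma x₁ = (c₂ * L ^ α) * (c₁ * Real.Gamma x₁) := by ring
        _ ≤ x₁ ^ α * (c₁ * Real.Gamma x₁) :=
            mul_le_mul_of_nonneg_right hr₁lo (by positivity)
        _ = c₁ * (x₁ ^ α * Real.Gamma x₁) := by ring
        _ ≤ Real.Gamma (x₁ + α) := hg₁lo
    · rw [hr₁def, div_le_iff₀ hΓx₁]
      calc Real.Gamma (x₁ + α) ≤ C₁ * (x₁ ^ α * Real.Gamma x₁) := hg₁hi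
        _ = (x₁ ^ α) * (C₁ * Real.Gamma x₁) := by ring
        _ ≤ (C₂ * L ^ α) * (C₁ * Real.Gamma x₁) :=
            mul_le_mul_of_nonneg_right hr₁hi (by positivity)
        _ = C₁ * C₂ * L ^ α * Real.Gamma x₁ := by ring
  have hr₂b : c₁ * c₂ * L ^ α ≤ r₂ ∧ r₂ ≤ C₁ * C₂ * L ^ α := by
    constructor
    · rw [hr₂def, le_div_iff₀ hΓx₂]
      calc c₁ * c₂ * L ^ α * Real.Gamma x₂ = (c₂ * L ^ α) * (c₁ * Real.Gamma x₂) := by ring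
        _ ≤ x₂ ^ α * (c₁ * Real.Gamma x₂) :=
            mul_le_mul_of_nonneg_right hr₂lo (by positivity)
        _ = c₁ * (x₂ ^ α * Real.Gamma x₂) := by ring
        _ ≤ Real.Gamma (x₂ + α) := hg₂lo
    · rw [hr₂def, div_le_iff₀ hΓx₂]
      calc Real.Gamma (x₂ + α) ≤ C₁ * (x₂ ^ α * Real.Gamma x₂) := hg₂hi
        _ = (x₂ ^ α) * (C₁ * Real.Gamma x₂) := by ring
        _ ≤ (C₂ * L ^ α) * (C₁ * Real.Gamma x₂) :=
            mul_le_mul_of_nonneg_right hr₂hi (by positivity)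
        _ = C₁ * C₂ * L ^ α * Real.Gamma x₂ := by ring
  have hr₁pos : 0 < r₁ := lt_of_lt_of_le (mul_pos (mul_pos hc₁ hc₂) hLa) hr₁b.1
  have hr₂pos : 0 < r₂ := lt_of_lt_of_le (mul_pos (mul_pos hc₁ hc₂) hLa) hr₂b.1
  -- the expression as a product
  have hE : (2 * L + α + β + 1) * Real.Gamma (β + 1) * Real.Gamma (L + α + β + 1) *
        Real.Gamma (L + α + 1) /
      (Real.Gamma (α + 1) * Real.Gamma (α + β + 2) * Real.Gamma (L + 1) *
        Real.Gamma (L + β + 1)) = (2 * L + (α + β + 1)) * K₀ * r₁ * r₂ := by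
    rw [e₁, e₂, e₃, e₄, hK₀, hr₁def, hr₂def]
    field_simp
    ring
  rw [hE]
  clear_value L x₁ x₂ r₁ r₂ K₀
  -- rpow identity
  have hLpow : L ^ (2*α+1) = L * (L ^ α * L ^ α) := by
    rw [show 2*α+1 = 1+(α+α) by ring, Real.rpow_add hL0, Real.rpow_one, Real.rpow_add hL0]
  have hfac_lo : 2 * L ≤ 2 * L + (α + β + 1) := by linarith
  have hfac_hi : 2 * L + (α + β + 1) ≤ (2 + (α + β + 1)) * L := by nlinarith
  have hccL : 0 < c₁ * c₂ * L ^ α := mul_pos (mul_pos hc₁ hc₂) hLa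
  have hCCL : 0 < C₁ * C₂ * L ^ α := mul_pos (mul_pos hC₁ hC₂) hLa
  have hs0 : (0:ℝ) < 2 * L + (α + β + 1) := by linarith
  have hs1 : (0:ℝ) < (2 + (α + β + 1)) * L := mul_pos (by linarith) hL0
  constructor
  · calc 2 * K₀ * (c₁ * c₂) ^ 2 * L ^ (2*α+1)
        = (2 * L) * K₀ * (c₁ * c₂ * L ^ α) * (c₁ * c₂ * L ^ α) := by rw [hLpow]; ring
      _ ≤ (2 * L + (α + β + 1)) * K₀ * (c₁ * c₂ * L ^ α) * (c₁ * c₂ * L ^ α) :=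
          mul_le_mul_of_nonneg_right (mul_le_mul_of_nonneg_right
            (mul_le_mul_of_nonneg_right hfac_lo hK₀pos.le) hccL.le) hccL.le
      _ ≤ (2 * L + (α + β + 1)) * K₀ * r₁ * (c₁ * c₂ * L ^ α) :=
          mul_le_mul_of_nonneg_right
            (mul_le_mul_of_nonneg_left hr₁b.1 (mul_pos hs0 hK₀pos).le) hccL.le
      _ ≤ (2 * L + (α + β + 1)) * K₀ * r₁ * r₂ :=
          mul_le_mul_of_nonneg_left hr₂b.1 (mul_pos (mul_pos hs0 hK₀pos) hr₁pos).le
  · calc (2 * L + (α + β + 1)) * K₀ * r₁ * r₂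
        ≤ (2 * L + (α + β + 1)) * K₀ * r₁ * (C₁ * C₂ * L ^ α) :=
          mul_le_mul_of_nonneg_left hr₂b.2 (mul_pos (mul_pos hs0 hK₀pos) hr₁pos).le
      _ ≤ (2 * L + (α + β + 1)) * K₀ * (C₁ * C₂ * L ^ α) * (C₁ * C₂ * L ^ α) :=
          mul_le_mul_of_nonneg_right
            (mul_le_mul_of_nonneg_left hr₁b.2 (mul_pos hs0 hK₀pos).le) hCCL.le
      _ ≤ ((2 + (α + β + 1)) * L) * K₀ * (C₁ * C₂ * L ^ α) * (C₁ * C₂ * L ^ α) :=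
          mul_le_mul_of_nonneg_right (mul_le_mul_of_nonneg_right
            (mul_le_mul_of_nonneg_right hfac_hi hK₀pos.le) hCCL.le) hCCL.le
      _ = (2 + (α + β + 1)) * K₀ * (C₁ * C₂) ^ 2 * L ^ (2*α+1) := by rw [hLpow]; ring
lemma Gamma_nonneg' {x : ℝ} (hx : 0 ≤ x) : 0 ≤ Real.Gamma x := by
  rcases eq_or_lt_of_le hx with h | h
  · rw [← h, Real.Gamma_zero]
  · exact (Real.Gamma_pos_of_pos h).le

lemma single_summable_iff (α β : ℝ) (hβ : -1/2 ≤ β) (hαβ : β ≤ α)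
    (N : ℕ → ℝ)
    (hN : ∀ ℓ : ℕ, N ℓ =
      (2 * ℓ + α + β + 1) * Real.Gamma (β + 1) * Real.Gamma (ℓ + α + β + 1) *
        Real.Gamma (ℓ + α + 1) /
      (Real.Gamma (α + 1) * Real.Gamma (α + β + 2) * Real.Gamma (ℓ + 1) *
        Real.Gamma (ℓ + β + 1)))
    (p : ℝ) (hp : 0 ≤ p) :
    Summable (fun ℓ : ℕ => N ℓ / (1 + ℓ * (ℓ + α + β + 1)) ^ p) ↔ α + 1 < p := by
  have hs : (0:ℝ) ≤ α + β + 1 := by linarith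
  -- positivity of denominators
  have hD : ∀ ℓ : ℕ, (0:ℝ) < 1 + ℓ * (ℓ + α + β + 1) := by
    intro ℓ
    have h0 : (0:ℝ) ≤ (ℓ:ℝ) := Nat.cast_nonneg ℓ
    nlinarith
  have hDp : ∀ ℓ : ℕ, (0:ℝ) < (1 + ℓ * (ℓ + α + β + 1)) ^ p :=
    fun ℓ => Real.rpow_pos_of_pos (hD ℓ) _
  -- nonnegativity of N
  have hNnn : ∀ ℓ : ℕ, 0 ≤ N ℓ := by
    intro ℓ
    rw [hN ℓ]
    have h0 : (0:ℝ) ≤ (ℓ:ℝ) := Nat.cast_nonneg ℓ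
    have h1 : 0 ≤ Real.Gamma (ℓ + α + β + 1) := Gamma_nonneg' (by linarith)
    have h2 : 0 < Real.Gamma (ℓ + α + 1) := Real.Gamma_pos_of_pos (by linarith)
    have h3 : 0 < Real.Gamma (β + 1) := Real.Gamma_pos_of_pos (by linarith)
    have h4 : 0 < Real.Gamma (α + 1) := Real.Gamma_pos_of_pos (by linarith)
    have h5 : 0 < Real.Gamma (α + β + 2) := Real.Gamma_pos_of_pos (by linarith)
    have h6 : 0 < Real.Gamma (ℓ + 1) := Real.Gamma_pos_of_pos (by linarith)
    have h7 : 0 < Real.Gamma (ℓ + β + 1) := Real.Gamma_pos_of_pos (by linarith)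
    apply div_nonneg
    · have : (0:ℝ) ≤ 2 * ℓ + α + β + 1 := by linarith
      positivity
    · positivity
  have hfnn : ∀ ℓ : ℕ, 0 ≤ N ℓ / (1 + ℓ * (ℓ + α + β + 1)) ^ p :=
    fun ℓ => div_nonneg (hNnn ℓ) (hDp ℓ).le
  -- bounds on D^p
  obtain ⟨c₃, C₃, hc₃, hC₃, hDb⟩ :=
    rpow_base_comparable (a := p) (K := α + β + 1 + 2) (by linarith)
  -- bounds on N
  obtain ⟨cN, CN, hcN, hCN, hNb⟩ := N_two_sided α β hβ hαβ
  -- combined bounds for ℓ ≥ 2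
  have key : ∀ ℓ : ℕ, 2 ≤ ℓ →
      (cN / C₃) * (ℓ:ℝ) ^ (2*α+1-2*p) ≤ N ℓ / (1 + ℓ * (ℓ + α + β + 1)) ^ p ∧
      N ℓ / (1 + ℓ * (ℓ + α + β + 1)) ^ p ≤ (CN / c₃) * (ℓ:ℝ) ^ (2*α+1-2*p) := by
    intro ℓ hℓ
    have hL : (2:ℝ) ≤ (ℓ:ℝ) := by exact_mod_cast hℓ
    have hL0 : (0:ℝ) < (ℓ:ℝ) := by linarith
    obtain ⟨hN'lo, hN'hi⟩ := hNb ℓ hℓ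
    rw [← hN ℓ] at hN'lo hN'hi
    have hll : (ℓ:ℝ) ≤ (ℓ:ℝ) * (ℓ:ℝ) := by nlinarith
    have hsl : (ℓ:ℝ) * (α + β + 1) ≤ ((ℓ:ℝ) * (ℓ:ℝ)) * (α + β + 1) :=
      mul_le_mul_of_nonneg_right hll hs
    obtain ⟨hD'lo, hD'hi⟩ := hDb ((ℓ:ℝ) * ℓ) (1 + ℓ * (ℓ + α + β + 1))
      (by positivity) (by nlinarith [mul_nonneg hL0.le hs]) (by nlinarith)
    have hxx : ((ℓ:ℝ) * ℓ) ^ p = (ℓ:ℝ) ^ (2*p) := by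
      rw [Real.mul_rpow hL0.le hL0.le, ← Real.rpow_add hL0]
      ring_nf
    rw [hxx] at hD'lo hD'hi
    have hsub : (ℓ:ℝ) ^ (2*α+1-2*p) = (ℓ:ℝ) ^ (2*α+1) / (ℓ:ℝ) ^ (2*p) :=
      Real.rpow_sub hL0 _ _
    have hl2p : (0:ℝ) < (ℓ:ℝ) ^ (2*p) := Real.rpow_pos_of_pos hL0 _
    have hl2a : (0:ℝ) < (ℓ:ℝ) ^ (2*α+1) := Real.rpow_pos_of_pos hL0 _
    constructor
    · calc (cN / C₃) * (ℓ:ℝ) ^ (2*α+1-2*p)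
          = (cN * (ℓ:ℝ) ^ (2*α+1)) / (C₃ * (ℓ:ℝ) ^ (2*p)) := by
            rw [hsub]; field_simp
        _ ≤ N ℓ / (1 + ℓ * (ℓ + α + β + 1)) ^ p :=
            div_le_div₀ (hNnn ℓ) hN'lo (hDp ℓ) hD'hi
    · calc N ℓ / (1 + ℓ * (ℓ + α + β + 1)) ^ p
          ≤ (CN * (ℓ:ℝ) ^ (2*α+1)) / (c₃ * (ℓ:ℝ) ^ (2*p)) :=
            div_le_div₀ (mul_pos hCN hl2a).le hN'hi (mul_pos hc₃ hl2p) hD'lo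
        _ = (CN / c₃) * (ℓ:ℝ) ^ (2*α+1-2*p) := by
            rw [hsub]; field_simp
  have hdivpos : 0 < cN / C₃ := div_pos hcN hC₃
  constructor
  · intro hsum
    by_contra hcon
    push_neg at hcon
    have hq : ¬ (2*α+1-2*p < -1) := by push_neg; linarith
    apply hq
    apply Real.summable_nat_rpow.mp
    have h2 : Summable (fun n : ℕ => N (n+2) / (1 + (n+2:ℕ) * ((n+2:ℕ) + α + β + 1)) ^ p) :=
      (summable_nat_add_iff (f := fun ℓ : ℕ => N ℓ / (1 + ℓ * (ℓ + α + β + 1)) ^ p) 2).mpr hsum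
    have h3 : Summable (fun n : ℕ => (cN / C₃) * ((n+2:ℕ):ℝ) ^ (2*α+1-2*p)) :=
      h2.of_nonneg_of_le (fun n => by positivity) (fun n => (key (n+2) (by omega)).1)
    have h4 : Summable (fun n : ℕ => ((n+2:ℕ):ℝ) ^ (2*α+1-2*p)) :=
      (summable_mul_left_iff (ne_of_gt hdivpos)).mp h3
    exact (summable_nat_add_iff (f := fun n : ℕ => (n:ℝ) ^ (2*α+1-2*p)) 2).mp h4
  · intro hlt
    have hq : 2*α+1-2*p < -1 := by linarith
    have hg : Summable (fun n : ℕ => (n:ℝ) ^ (2*α+1-2*p)) := Real.summable_nat_rpow.mpr hq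
    have hg2 : Summable (fun n : ℕ => (CN / c₃) * ((n+2:ℕ):ℝ) ^ (2*α+1-2*p)) :=
      ((summable_nat_add_iff (f := fun n : ℕ => (n:ℝ) ^ (2*α+1-2*p)) 2).mpr hg).mul_left _
    have h2 : Summable (fun n : ℕ => N (n+2) / (1 + (n+2:ℕ) * ((n+2:ℕ) + α + β + 1)) ^ p) :=
      hg2.of_nonneg_of_le (fun n => hfnn (n+2)) (fun n => (key (n+2) (by omega)).2)
    exact (summable_nat_add_iff (f := fun ℓ : ℕ => N ℓ / (1 + ℓ * (ℓ + α + β + 1)) ^ p) 2).mp h2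
set_option maxHeartbeats 1000000 in
/-- For `α ≥ β ≥ -1/2` and `p ≥ 0`, the double series
`∑_{ℓ,ℓ'} N ℓ N ℓ' / ((1 + ℓ(ℓ+α+β+1))^p (1 + ℓ'(ℓ'+α+β+1))^p)` converges if and
only if `p > α + 1`, if and only if the single series `∑_ℓ N ℓ / (1 + ℓ(ℓ+α+β+1))^p`
converges (the RKHS criterion for the tensorial Sobolev space `ℍ_p`). -/
theorem tensor_sobolev_RKHS_criterion
    (α β : ℝ) (hβ : -1/2 ≤ β) (hαβ : β ≤ α)
    (N : ℕ → ℝ)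
    (hN : ∀ ℓ : ℕ, N ℓ =
      (2 * ℓ + α + β + 1) * Real.Gamma (β + 1) * Real.Gamma (ℓ + α + β + 1) *
        Real.Gamma (ℓ + α + 1) /
      (Real.Gamma (α + 1) * Real.Gamma (α + β + 2) * Real.Gamma (ℓ + 1) *
        Real.Gamma (ℓ + β + 1)))
    (p : ℝ) (hp : 0 ≤ p) :
    (Summable (fun q : ℕ × ℕ =>
        N q.1 * N q.2 /
          ((1 + q.1 * (q.1 + α + β + 1)) ^ p * (1 + q.2 * (q.2 + α + β + 1)) ^ p))
      ↔ α + 1 < p)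
    ∧ (Summable (fun q : ℕ × ℕ =>
        N q.1 * N q.2 /
          ((1 + q.1 * (q.1 + α + β + 1)) ^ p * (1 + q.2 * (q.2 + α + β + 1)) ^ p))
      ↔ Summable (fun ℓ : ℕ => N ℓ / (1 + ℓ * (ℓ + α + β + 1)) ^ p)) := by
  have hs : (0:ℝ) ≤ α + β + 1 := by linarith
  set F : ℕ → ℝ := fun ℓ => N ℓ / (1 + ℓ * (ℓ + α + β + 1)) ^ p with hF
  have hD : ∀ ℓ : ℕ, (0:ℝ) < 1 + ℓ * (ℓ + α + β + 1) := by
    intro ℓ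
    have h0 : (0:ℝ) ≤ (ℓ:ℝ) := Nat.cast_nonneg ℓ
    nlinarith
  have hDp : ∀ ℓ : ℕ, (0:ℝ) < (1 + ℓ * (ℓ + α + β + 1)) ^ p :=
    fun ℓ => Real.rpow_pos_of_pos (hD ℓ) _
  have hNnn : ∀ ℓ : ℕ, 0 ≤ N ℓ := by
    intro ℓ
    rw [hN ℓ]
    have h0 : (0:ℝ) ≤ (ℓ:ℝ) := Nat.cast_nonneg ℓ
    have h1 : 0 ≤ Real.Gamma (ℓ + α + β + 1) := Gamma_nonneg' (by linarith)
    have h2 : 0 < Real.Gamma (ℓ + α + 1) := Real.Gamma_pos_of_pos (by linarith)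
    have h3 : 0 < Real.Gamma (β + 1) := Real.Gamma_pos_of_pos (by linarith)
    have h4 : 0 < Real.Gamma (α + 1) := Real.Gamma_pos_of_pos (by linarith)
    have h5 : 0 < Real.Gamma (α + β + 2) := Real.Gamma_pos_of_pos (by linarith)
    have h6 : 0 < Real.Gamma (ℓ + 1) := Real.Gamma_pos_of_pos (by linarith)
    have h7 : 0 < Real.Gamma (ℓ + β + 1) := Real.Gamma_pos_of_pos (by linarith)
    apply div_nonneg
    · have h8 : (0:ℝ) ≤ 2 * ℓ + α + β + 1 := by linarith
      positivity
    · positivity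
  have hFnn : ∀ ℓ : ℕ, 0 ≤ F ℓ := fun ℓ => div_nonneg (hNnn ℓ) (hDp ℓ).le
  have hF2 : 0 < F 2 := by
    apply div_pos _ (hDp 2)
    rw [hN 2]
    have hc : ((2:ℕ):ℝ) = (2:ℝ) := by norm_num
    rw [hc]
    have h1 : 0 < Real.Gamma ((2:ℝ) + α + β + 1) := Real.Gamma_pos_of_pos (by linarith)
    have h2 : 0 < Real.Gamma ((2:ℝ) + α + 1) := Real.Gamma_pos_of_pos (by linarith)
    have h3 : 0 < Real.Gamma (β + 1) := Real.Gamma_pos_of_pos (by linarith)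
    have h4 : 0 < Real.Gamma (α + 1) := Real.Gamma_pos_of_pos (by linarith)
    have h5 : 0 < Real.Gamma (α + β + 2) := Real.Gamma_pos_of_pos (by linarith)
    have h6 : 0 < Real.Gamma ((2:ℝ) + 1) := Real.Gamma_pos_of_pos (by linarith)
    have h7 : 0 < Real.Gamma ((2:ℝ) + β + 1) := Real.Gamma_pos_of_pos (by linarith)
    have h8 : (0:ℝ) < 2 * 2 + α + β + 1 := by linarith
    positivity
  have hsingle : Summable F ↔ α + 1 < p :=
    single_summable_iff α β hβ hαβ N hN p hp
  have hterm : (fun q : ℕ × ℕ =>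
      N q.1 * N q.2 /
        ((1 + q.1 * (q.1 + α + β + 1)) ^ p * (1 + q.2 * (q.2 + α + β + 1)) ^ p)) =
      fun q : ℕ × ℕ => F q.1 * F q.2 := by
    funext q
    exact (div_mul_div_comm _ _ _ _).symm
  clear_value F
  have hdouble : Summable (fun q : ℕ × ℕ => F q.1 * F q.2) ↔ α + 1 < p := by
    constructor
    · intro hsum
      have hinj : Function.Injective (fun ℓ : ℕ => ((ℓ, 2) : ℕ × ℕ)) :=
        fun a b h => by simpa using congrArg Prod.fst h
      have hcomp : Summable (fun ℓ : ℕ => F ℓ * F 2) := hsum.comp_injective hinj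
      exact hsingle.mp ((summable_mul_right_iff (ne_of_gt hF2)).mp hcomp)
    · intro hlt
      exact Summable.mul_of_nonneg (hsingle.mpr hlt) (hsingle.mpr hlt) hFnn hFnn
  have heq : Summable (fun q : ℕ × ℕ =>
      N q.1 * N q.2 /
        ((1 + q.1 * (q.1 + α + β + 1)) ^ p * (1 + q.2 * (q.2 + α + β + 1)) ^ p)) ↔
      Summable (fun q : ℕ × ℕ => F q.1 * F q.2) := Iff.of_eq (congrArg Summable hterm)
  exact ⟨heq.trans hdouble, heq.trans (hdouble.trans hsingle.symm)⟩
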